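/- The series ∑_{n≥0} S_n / ((2n+3)·108^n) converges to 27√3/256, where S_0 = 1/2 and S_n = C(6n,3n)·C(3n,n)/(2(2n+1)·C(2n,n)) for n ≥ 1. -/

import Mathlib

/-!
With `a n = S n / 108 ^ n`, the ratio of consecutive binomial products gives
`(2n+2)(2n+3) a (n+1) = ((2n+1)^2 - (2/3)^2) a n`, which is exactly the recurrence making
`P x = ∑ a n x^(2n+1)` a solution of the Chebyshev equation
`(1 - x²) P'' - x P' + (2/3)² P = 0`. Along `x = sin θ` this equation becomes
`g'' = -(2/3)² g`, so with `P 0 = 0` and `P' 0 = a 0 = 1/2` we get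
`P (sin θ) = (3/4) sin (2θ/3)`. Since `∫₀^{π/2} sin^(2n+2) θ cos θ dθ = 1/(2n+3)`, the series
is `∫₀^{π/2} (3/4) sin (2θ/3) sin θ cos θ dθ = 27√3/256`.
-/

noncomputable def S (n : ℕ) : ℝ :=
  if n = 0 then 1 / 2 else
    (Nat.choose (6 * n) (3 * n) * Nat.choose (3 * n) n : ℝ)
      / (2 * (2 * n + 1) * Nat.choose (2 * n) n)

open Real Set Function MeasureTheory
open scoped Nat

lemma summable_natCast_add_one_pow_mul_pow_sub_one {e : ℕ → ℕ} (he : Injective e) {r : ℝ}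
    (hr0 : 0 < r) (hr1 : r < 1) (k : ℕ) :
    Summable fun n => ((e n : ℝ) + 1) ^ k * r ^ (e n - 1) := by
  have hgeom : Summable fun m : ℕ => ((m : ℝ) + 1) ^ k * r ^ (m + 1) := by
    have hr : ‖r‖ < 1 := by rwa [norm_of_nonneg hr0.le]
    have := (summable_nat_add_iff (f := fun m : ℕ => (m : ℝ) ^ k * r ^ m) 1).2
      (summable_pow_mul_geometric_of_norm_lt_one k hr)
    simpa using this
  have hsum : Summable fun m : ℕ => ((m : ℝ) + 1) ^ k * r ^ (m - 1) := by
    refine (hgeom.div_const (r ^ 2)).of_nonneg_of_le (fun m => by positivity) fun m => ?_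
    rw [mul_div_assoc]
    gcongr
    rw [le_div_iff₀ (by positivity)]
    rcases m with _ | m
    · simp only [zero_add, pow_one, Nat.zero_sub, pow_zero, one_mul]
      nlinarith
    · rw [Nat.add_sub_cancel, ← pow_add]
  exact hsum.comp_injective he

section MonomialSeries

variable {b : ℕ → ℝ} {e : ℕ → ℕ} {C : ℝ} {k : ℕ}

lemma abs_mul_natCast_mul_pow_sub_one_le (hb : ∀ n, |b n| ≤ C * ((e n : ℝ) + 1) ^ k)
    {r y : ℝ} (hy : |y| ≤ r) (n : ℕ) :
    |b n * e n * y ^ (e n - 1)| ≤ C * (((e n : ℝ) + 1) ^ (k + 1) * r ^ (e n - 1)) := by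
  have hC : 0 ≤ C * ((e n : ℝ) + 1) ^ k := (abs_nonneg _).trans (hb n)
  rw [abs_mul, abs_mul, abs_pow, Nat.abs_cast, pow_succ]
  calc |b n| * e n * |y| ^ (e n - 1)
      ≤ C * ((e n : ℝ) + 1) ^ k * ((e n : ℝ) + 1) * r ^ (e n - 1) := by
        gcongr
        · exact hb n
        · linarith
    _ = _ := by ring

variable (he : Injective e) (hb : ∀ n, |b n| ≤ C * ((e n : ℝ) + 1) ^ k)
include he hb

lemma summable_mul_pow {x : ℝ} (hx : |x| < 1) : Summable fun n => b n * x ^ e n := by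
  obtain ⟨r, hxr, hr1⟩ := exists_between hx
  have hr0 : 0 < r := (abs_nonneg x).trans_lt hxr
  refine ((summable_natCast_add_one_pow_mul_pow_sub_one he hr0 hr1 k).mul_left C)
    |>.of_norm_bounded fun n => ?_
  have hC : 0 ≤ C * ((e n : ℝ) + 1) ^ k := (abs_nonneg _).trans (hb n)
  rw [norm_mul, norm_pow, Real.norm_eq_abs, Real.norm_eq_abs, ← mul_assoc]
  gcongr
  · exact hb n
  · calc |x| ^ e n ≤ r ^ e n := by gcongr
      _ ≤ r ^ (e n - 1) := pow_le_pow_of_le_one hr0.le hr1.le (Nat.sub_le _ _)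

lemma summable_mul_natCast_mul_pow_sub_one {x : ℝ} (hx : |x| < 1) :
    Summable fun n => b n * e n * x ^ (e n - 1) := by
  obtain ⟨r, hxr, hr1⟩ := exists_between hx
  refine ((summable_natCast_add_one_pow_mul_pow_sub_one he ((abs_nonneg x).trans_lt hxr) hr1
    (k + 1)).mul_left C).of_norm_bounded fun n => ?_
  exact abs_mul_natCast_mul_pow_sub_one_le hb hxr.le n

lemma hasDerivAt_tsum_mul_pow {x : ℝ} (hx : |x| < 1) :
    HasDerivAt (fun y => ∑' n, b n * y ^ e n) (∑' n, b n * e n * x ^ (e n - 1)) x := by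
  obtain ⟨r, hxr, hr1⟩ := exists_between hx
  have hr0 : 0 < r := (abs_nonneg x).trans_lt hxr
  refine hasDerivAt_tsum_of_isPreconnected (t := Ioo (-r) r) (g := fun n y => b n * y ^ e n)
    (g' := fun n y => b n * e n * y ^ (e n - 1))
    ((summable_natCast_add_one_pow_mul_pow_sub_one he hr0 hr1 (k + 1)).mul_left C)
    isOpen_Ioo isPreconnected_Ioo (fun n y _ => ?_) (fun n y hy => ?_)
    (show (0 : ℝ) ∈ Ioo (-r) r by constructor <;> linarith)
    (summable_mul_pow he hb (by simp)) (abs_lt.1 hxr)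
  · simpa [mul_assoc] using (hasDerivAt_pow (e n) y).const_mul (b n)
  · exact abs_mul_natCast_mul_pow_sub_one_le hb (abs_le.2 ⟨hy.1.le, hy.2.le⟩) n

end MonomialSeries

section OddSeries

variable {c : ℕ → ℝ} {C : ℝ} {x : ℝ}

lemma injective_two_mul_add_one : Injective fun n : ℕ => 2 * n + 1 :=
  fun _ _ h => by simpa using h

lemma injective_two_mul : Injective fun n : ℕ => 2 * n := fun _ _ h => by simpa using h

variable (hc : ∀ n, |c n| ≤ C)
include hc

lemma abs_mul_two_mul_add_one_le (n : ℕ) :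
    |c n * (2 * n + 1)| ≤ C * (((2 * n : ℕ) : ℝ) + 1) ^ 1 := by
  rw [abs_mul, abs_of_pos (by positivity : (0 : ℝ) < 2 * n + 1)]
  push_cast
  rw [pow_one]
  exact mul_le_mul_of_nonneg_right (hc n) (by positivity)

lemma hasDerivAt_tsum_mul_pow_two_mul_add_one (hx : |x| < 1) :
    HasDerivAt (fun y => ∑' n, c n * y ^ (2 * n + 1))
      (∑' n, c n * (2 * n + 1) * x ^ (2 * n)) x := by
  simpa using hasDerivAt_tsum_mul_pow (e := fun n => 2 * n + 1) (k := 0)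
    injective_two_mul_add_one (by simpa using hc) hx

lemma hasDerivAt_tsum_mul_pow_two_mul (hx : |x| < 1) :
    HasDerivAt (fun y => ∑' n, c n * (2 * n + 1) * y ^ (2 * n))
      (∑' n, c n * (2 * n + 1) * (2 * n) * x ^ (2 * n - 1)) x := by
  simpa using hasDerivAt_tsum_mul_pow (e := fun n => 2 * n) injective_two_mul
    (abs_mul_two_mul_add_one_le hc) hx

lemma tsum_mul_pow_two_mul_add_one_chebyshev_ode {α : ℝ}
    (hrec : ∀ n : ℕ, (2 * n + 2) * (2 * n + 3) * c (n + 1) = ((2 * n + 1) ^ 2 - α ^ 2) * c n)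
    (hx : |x| < 1) :
    (1 - x ^ 2) * (∑' n, c n * (2 * n + 1) * (2 * n) * x ^ (2 * n - 1))
      - x * (∑' n, c n * (2 * n + 1) * x ^ (2 * n))
      + α ^ 2 * (∑' n, c n * x ^ (2 * n + 1)) = 0 := by
  set P := ∑' n, c n * x ^ (2 * n + 1)
  set Q := ∑' n, c n * (2 * n + 1) * x ^ (2 * n)
  set W := ∑' n, c n * (2 * n + 1) * (2 * n) * x ^ (2 * n - 1)
  have hP : HasSum (fun n => c n * x ^ (2 * n + 1)) P :=
    (summable_mul_pow (e := fun n => 2 * n + 1) (k := 0) injective_two_mul_add_one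
      (by simpa using hc) hx).hasSum
  have hQ : HasSum (fun n => c n * (2 * n + 1) * x ^ (2 * n)) Q :=
    (summable_mul_pow (e := fun n => 2 * n) injective_two_mul (abs_mul_two_mul_add_one_le hc)
      hx).hasSum
  have hW : HasSum (fun n => c n * (2 * n + 1) * (2 * n) * x ^ (2 * n - 1)) W := by
    simpa using (summable_mul_natCast_mul_pow_sub_one (e := fun n => 2 * n) injective_two_mul
      (abs_mul_two_mul_add_one_le hc) hx).hasSum
  -- all four series are re-indexed over `x ^ (2 * n + 1)`, where `hrec` kills each coefficient
  have hW_shift :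
      HasSum (fun n : ℕ => (2 * n + 2) * (2 * n + 3) * c (n + 1) * x ^ (2 * n + 1)) W := by
    have h := (hasSum_nat_add_iff' 1).2 hW
    simp only [Nat.cast_add, Nat.cast_one, Finset.range_one, Finset.sum_singleton,
      CharP.cast_eq_zero, mul_zero, zero_add, mul_one, zero_tsub, pow_zero, sub_zero] at h
    refine h.congr_fun fun n => ?_
    rw [show 2 * (n + 1) - 1 = 2 * n + 1 by omega]
    ring
  have hx2W :
      HasSum (fun n => c n * (2 * n + 1) * (2 * n) * x ^ (2 * n + 1)) (x ^ 2 * W) := by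
    refine (hW.mul_left (x ^ 2)).congr_fun fun n => ?_
    rcases n with _ | n
    · simp
    · rw [show 2 * (n + 1) + 1 = 2 * (n + 1) - 1 + 2 by omega, pow_add]
      ring
  have hxQ : HasSum (fun n => c n * (2 * n + 1) * x ^ (2 * n + 1)) (x * Q) := by
    refine (hQ.mul_left x).congr_fun fun n => ?_
    ring
  have hsum : HasSum (fun _ : ℕ => (0 : ℝ)) (W - x ^ 2 * W - x * Q + α ^ 2 * P) := by
    refine (((hW_shift.sub hx2W).sub hxQ).add (hP.mul_left (α ^ 2))).congr_fun fun n => ?_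
    linear_combination -x ^ (2 * n + 1) * hrec n
  linear_combination -hasSum_zero.unique hsum

end OddSeries

lemma eq_cos_add_sin_of_hasDerivAt {g g' : ℝ → ℝ} {s : Set ℝ} {α t : ℝ} (hs : IsOpen s)
    (hs' : IsPreconnected s) (hα : α ≠ 0) (hg : ∀ u ∈ s, HasDerivAt g (g' u) u)
    (hg' : ∀ u ∈ s, HasDerivAt g' (-(α ^ 2 * g u)) u) (h0 : 0 ∈ s) (ht : t ∈ s) :
    g t = g 0 * cos (α * t) + g' 0 / α * sin (α * t) := by
  have hconst {F : ℝ → ℝ} (hF : ∀ u ∈ s, HasDerivAt F 0 u) : F t = F 0 :=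
    hs.is_const_of_deriv_eq_zero hs'
      (fun u hu => (hF u hu).differentiableAt.differentiableWithinAt)
      (fun u hu => (hF u hu).deriv) ht h0
  have hcos (u : ℝ) : HasDerivAt (fun u => cos (α * u)) (-sin (α * u) * α) u := by
    simpa using ((hasDerivAt_id u).const_mul α).cos
  have hsin (u : ℝ) : HasDerivAt (fun u => sin (α * u)) (cos (α * u) * α) u := by
    simpa using ((hasDerivAt_id u).const_mul α).sin
  -- `g cos - g' sin / α` and `g sin + g' cos / α` are first integrals of `g'' = -α² g`
  have hB := hconst (F := fun u => g u * cos (α * u) - g' u / α * sin (α * u)) fun u hu => by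
    refine (((hg u hu).mul (hcos u)).sub
      (((hg' u hu).div_const α).mul (hsin u))).congr_deriv ?_
    field_simp
    ring
  have hC := hconst (F := fun u => g u * sin (α * u) + g' u / α * cos (α * u)) fun u hu => by
    refine (((hg u hu).mul (hsin u)).add
      (((hg' u hu).div_const α).mul (hcos u))).congr_deriv ?_
    field_simp
    ring
  simp only [mul_zero, cos_zero, sin_zero, mul_one, sub_zero, zero_add] at hB hC
  linear_combination cos (α * t) * hB + sin (α * t) * hC - g t * sin_sq_add_cos_sq (α * t)

lemma abs_sin_lt_one_of_mem_Ioo {θ : ℝ} (hθ : θ ∈ Ioo (-(π / 2)) (π / 2)) : |sin θ| < 1 := by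
  rw [← sq_lt_one_iff_abs_lt_one, sin_sq]
  linarith [pow_pos (cos_pos_of_mem_Ioo hθ) 2]

lemma apply_sin_eq_of_chebyshev_ode {f f' f'' : ℝ → ℝ} {α θ : ℝ} (hα : α ≠ 0)
    (hf : ∀ x, |x| < 1 → HasDerivAt f (f' x) x) (hf' : ∀ x, |x| < 1 → HasDerivAt f' (f'' x) x)
    (hode : ∀ x, |x| < 1 → (1 - x ^ 2) * f'' x - x * f' x + α ^ 2 * f x = 0)
    (hθ : θ ∈ Ioo (-(π / 2)) (π / 2)) :
    f (sin θ) = f 0 * cos (α * θ) + f' 0 / α * sin (α * θ) := by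
  have h := eq_cos_add_sin_of_hasDerivAt (g := fun t => f (sin t))
    (g' := fun t => cos t * f' (sin t)) isOpen_Ioo isPreconnected_Ioo hα
    (fun u hu => ?_) (fun u hu => ?_) (by constructor <;> linarith [pi_pos]) hθ
  · simpa using h
  · exact ((hf _ (abs_sin_lt_one_of_mem_Ioo hu)).comp u (hasDerivAt_sin u)).congr_deriv
      (mul_comm _ _)
  · have hs := abs_sin_lt_one_of_mem_Ioo hu
    refine ((hasDerivAt_cos u).mul ((hf' _ hs).comp u (hasDerivAt_sin u))).congr_deriv ?_
    rw [Function.comp_apply]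
    linear_combination hode _ hs + f'' (sin u) * cos_sq' u

lemma tsum_mul_sin_pow_two_mul_add_one {c : ℕ → ℝ} {C α θ : ℝ} (hc : ∀ n, |c n| ≤ C)
    (hrec : ∀ n : ℕ, (2 * n + 2) * (2 * n + 3) * c (n + 1) = ((2 * n + 1) ^ 2 - α ^ 2) * c n)
    (hα : α ≠ 0) (hθ : θ ∈ Ioo (-(π / 2)) (π / 2)) :
    ∑' n, c n * sin θ ^ (2 * n + 1) = c 0 / α * sin (α * θ) := by
  have h := apply_sin_eq_of_chebyshev_ode hα
    (fun _ hx => hasDerivAt_tsum_mul_pow_two_mul_add_one hc hx)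
    (fun _ hx => hasDerivAt_tsum_mul_pow_two_mul hc hx)
    (fun _ hx => tsum_mul_pow_two_mul_add_one_chebyshev_ode hc hrec hx) hθ
  rw [h, tsum_eq_single 0 fun n hn => by simp [hn], tsum_eq_single 0 fun n hn => by simp [hn]]
  simp

lemma integral_sin_pow_mul_cos (k : ℕ) :
    ∫ θ in Ioo 0 (π / 2), sin θ ^ k * cos θ = 1 / (k + 1) := by
  rw [← integral_Ioc_eq_integral_Ioo, ← intervalIntegral.integral_of_le (by positivity)]
  simpa using integral_sin_pow_mul_cos_pow_odd (a := 0) (b := π / 2) k 0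

lemma hasSum_integral_tsum_mul_sin_pow_mul_cos {c : ℕ → ℝ} {k : ℕ → ℕ} (hc : ∀ n, 0 ≤ c n)
    (hs : Summable fun n => c n / (k n + 1)) :
    HasSum (fun n => c n / (k n + 1))
      (∫ θ in Ioo 0 (π / 2), ∑' n, c n * sin θ ^ k n * cos θ) := by
  have hint (n : ℕ) : ∫ θ in Ioo 0 (π / 2), c n * sin θ ^ k n * cos θ = c n / (k n + 1) := by
    simp_rw [mul_assoc]
    rw [integral_const_mul, integral_sin_pow_mul_cos, mul_one_div]
  have hnorm (n : ℕ) :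
      ∫ θ in Ioo 0 (π / 2), ‖c n * sin θ ^ k n * cos θ‖ = c n / (k n + 1) := by
    rw [← hint n]
    refine setIntegral_congr_fun measurableSet_Ioo fun θ hθ => norm_of_nonneg ?_
    have := sin_nonneg_of_nonneg_of_le_pi hθ.1.le (by linarith [hθ.2, pi_pos])
    have := cos_nonneg_of_mem_Icc ⟨by linarith [hθ.1, pi_pos], hθ.2.le⟩
    have := hc n
    positivity
  have hintegrable (n : ℕ) :
      IntegrableOn (fun θ => c n * sin θ ^ k n * cos θ) (Ioo 0 (π / 2)) :=
    (by fun_prop : Continuous fun θ => c n * sin θ ^ k n * cos θ).integrableOn_Icc.mono_set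
      Ioo_subset_Icc_self
  simpa only [hint] using
    hasSum_integral_of_summable_integral_norm hintegrable (by simpa only [hnorm] using hs)

lemma integral_sin_two_div_three_mul_mul_sin_mul_cos :
    ∫ θ in Ioo 0 (π / 2), 3 / 4 * sin (2 / 3 * θ) * (sin θ * cos θ) = 27 * √3 / 256 := by
  rw [← integral_Ioc_eq_integral_Ioo, ← intervalIntegral.integral_of_le (by positivity)]
  -- product to sum: `sin (2θ/3) sin θ cos θ = (cos (4θ/3) - cos (8θ/3)) / 4`
  have hderiv (θ : ℝ) :
      HasDerivAt (fun θ => 9 / 64 * sin (4 / 3 * θ) - 9 / 128 * sin (8 / 3 * θ))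
        (3 / 4 * sin (2 / 3 * θ) * (sin θ * cos θ)) θ := by
    have h4 := (((hasDerivAt_id θ).const_mul (4 / 3 : ℝ)).sin).const_mul (9 / 64 : ℝ)
    have h8 := (((hasDerivAt_id θ).const_mul (8 / 3 : ℝ)).sin).const_mul (9 / 128 : ℝ)
    refine (h4.sub h8).congr_deriv ?_
    have hcc := cos_sub_cos (4 / 3 * θ) (8 / 3 * θ)
    rw [show (4 / 3 * θ + 8 / 3 * θ) / 2 = 2 * θ by ring,
      show (4 / 3 * θ - 8 / 3 * θ) / 2 = -(2 / 3 * θ) by ring, sin_neg, sin_two_mul] at hcc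
    simp only [id]
    linear_combination 3 / 16 * hcc
  rw [intervalIntegral.integral_eq_sub_of_hasDerivAt (fun θ _ => hderiv θ)
    ((by fun_prop : Continuous fun θ => 3 / 4 * sin (2 / 3 * θ) * (sin θ * cos θ))
      |>.intervalIntegrable _ _)]
  rw [show 4 / 3 * (π / 2) = π - π / 3 by ring, show 8 / 3 * (π / 2) = π / 3 + π by ring,
    sin_pi_sub, sin_add_pi, sin_pi_div_three]
  norm_num
  ring

noncomputable def scaledS (n : ℕ) : ℝ := S n / 108 ^ n

lemma S_eq_factorial (n : ℕ) :
    S n = ((6 * n)! * n ! : ℝ) / (2 * (2 * n + 1) * (3 * n)! * (2 * n)! ^ 2) := by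
  rcases eq_or_ne n 0 with rfl | hn
  · simp [S]
  rw [S, if_neg hn, Nat.cast_choose ℝ (by omega : 3 * n ≤ 6 * n),
    Nat.cast_choose ℝ (by omega : n ≤ 3 * n), Nat.cast_choose ℝ (by omega : n ≤ 2 * n),
    show 6 * n - 3 * n = 3 * n by omega, show 3 * n - n = 2 * n by omega,
    show 2 * n - n = n by omega]
  field_simp

lemma scaledS_zero : scaledS 0 = 1 / 2 := by simp [scaledS, S]

lemma scaledS_succ (n : ℕ) :
    (2 * n + 2) * (2 * n + 3) * scaledS (n + 1) =
      ((2 * n + 1) ^ 2 - (2 / 3) ^ 2) * scaledS n := by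
  have h6 : 6 * (n + 1) = 6 * n + 5 + 1 := by ring
  have h3 : 3 * (n + 1) = 3 * n + 2 + 1 := by ring
  have h2 : 2 * (n + 1) = 2 * n + 1 + 1 := by ring
  simp only [scaledS, S_eq_factorial, h6, h3, h2, Nat.factorial_succ]
  push_cast
  field_simp
  ring

lemma scaledS_nonneg (n : ℕ) : 0 ≤ scaledS n := by
  unfold scaledS S
  split_ifs <;> positivity

lemma scaledS_le (n : ℕ) : scaledS n ≤ 1 / (2 * (2 * n + 1)) := by
  induction n with
  | zero => simp [scaledS_zero]
  | succ n ih =>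
    have hbound : ((2 * n + 1) ^ 2 - (2 / 3) ^ 2) * scaledS n ≤ (n + 1 : ℝ) :=
      calc ((2 * n + 1) ^ 2 - (2 / 3) ^ 2) * scaledS n
          ≤ ((2 * n + 1) ^ 2 - (2 / 3) ^ 2) * (1 / (2 * (2 * n + 1) : ℝ)) := by
            gcongr
            nlinarith [(n.cast_nonneg : (0 : ℝ) ≤ n)]
        _ ≤ (n + 1 : ℝ) := by
            rw [mul_one_div, div_le_iff₀ (by positivity)]
            nlinarith
    rw [← scaledS_succ] at hbound
    rw [show (1 : ℝ) / (2 * (2 * (n + 1 : ℕ) + 1)) = (n + 1) / ((2 * n + 2) * (2 * n + 3)) by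
      push_cast; field_simp; ring, le_div_iff₀ (by positivity)]
    linarith

lemma abs_scaledS_le_half (n : ℕ) : |scaledS n| ≤ 1 / 2 := by
  rw [abs_of_nonneg (scaledS_nonneg n)]
  refine (scaledS_le n).trans ?_
  gcongr
  linarith [(n.cast_nonneg : (0 : ℝ) ≤ n)]

lemma summable_scaledS_div : Summable fun n => scaledS n / ((2 * n + 2 : ℕ) + 1) := by
  refine ((summable_nat_add_iff 1).2 (Real.summable_one_div_nat_pow.2 one_lt_two))
    |>.of_nonneg_of_le (fun n => div_nonneg (scaledS_nonneg n) (by positivity)) fun n => ?_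
  calc scaledS n / ((2 * n + 2 : ℕ) + 1)
      ≤ 1 / (2 * (2 * n + 1)) / ((2 * n + 2 : ℕ) + 1) := by gcongr; exact scaledS_le n
    _ ≤ 1 / ((n + 1 : ℕ) : ℝ) ^ 2 := by
      push_cast
      rw [div_div, div_le_div_iff₀ (by positivity) (by positivity)]
      nlinarith

theorem S_weighted_sum :
    HasSum (fun n : ℕ => S n / ((2 * n + 3) * 108 ^ n)) (27 * Real.sqrt 3 / 256) := by
  have hseries (θ : ℝ) (hθ : θ ∈ Ioo 0 (π / 2)) :
      ∑' n, scaledS n * sin θ ^ (2 * n + 2) * cos θ =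
        3 / 4 * sin (2 / 3 * θ) * (sin θ * cos θ) := by
    have h := tsum_mul_sin_pow_two_mul_add_one abs_scaledS_le_half scaledS_succ (by norm_num)
      ⟨by linarith [hθ.1, pi_pos], hθ.2⟩
    calc ∑' n, scaledS n * sin θ ^ (2 * n + 2) * cos θ
        = (∑' n, scaledS n * sin θ ^ (2 * n + 1)) * (sin θ * cos θ) := by
          rw [← tsum_mul_right]
          exact tsum_congr fun n => by ring
      _ = _ := by rw [h, scaledS_zero]; ring
  have h := hasSum_integral_tsum_mul_sin_pow_mul_cos scaledS_nonneg summable_scaledS_div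
  rw [setIntegral_congr_fun measurableSet_Ioo hseries,
    integral_sin_two_div_three_mul_mul_sin_mul_cos] at h
  refine h.congr_fun fun n => ?_
  rw [scaledS, div_div]
  push_cast
  ring
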